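/- arXiv:2402.15184 — 6 statements merged into one kernel-verified Lean document; each statement's English description precedes it below -/
import Mathlib

section
/- Let A be an n×n real Hurwitz matrix and Q an n×n real symmetric matrix. Then the function t ↦ exp(tA) · Q · exp(tAᵀ) is integrable on [0, ∞), and the matrix C := 2∫₀^∞ exp(tA) · Q · exp(tAᵀ) dt satisfies the fluctuation–dissipation relation 0 = A·C + C·Aᵀ + 2Q. -/
/-!
Since `exp A` commutes with `A`, every eigenspace of `exp A` contains an eigenvector of
`A`; hence every eigenvalue of `exp A` is `exp μ` for an eigenvalue `μ` of `A`, and for a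
Hurwitz matrix the spectral radius of `exp A` is `< 1`. Gelfand's formula then gives some power
`exp A ^ N = exp (N • A)` of norm `< 1`, and the semigroup law `exp ((s + k N) • A) =
exp (s • A) * exp (N • A) ^ k` turns this into exponential decay of `‖exp (t • A)‖`.
So `g t = exp (t • A) * Q * exp (t • Aᵀ)` is integrable on `[0, ∞)`; it solves
`g' = A g + g Aᵀ`, tends to `0`, and integrating the equation over `[0, ∞)` gives
`A C + C Aᵀ = -2 g 0 = -2 Q`.
-/

open Matrix Polynomial NormedSpace MeasureTheory

attribute [local instance] Matrix.normedAddCommGroup Matrix.normedSpace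

open Filter Set

theorem pow_floor_le_inv_mul_rpow {r x : ℝ} (hr0 : 0 < r) (hr1 : r ≤ 1) :
    r ^ ⌊x⌋₊ ≤ r⁻¹ * r ^ x :=
  calc r ^ ⌊x⌋₊ = r ^ (⌊x⌋₊ : ℝ) := (Real.rpow_natCast r _).symm
    _ ≤ r ^ (x - 1) := Real.rpow_le_rpow_of_exponent_ge hr0 hr1 (Nat.sub_one_lt_floor x).le
    _ = r⁻¹ * r ^ x := by rw [Real.rpow_sub_one hr0.ne', div_eq_inv_mul]

section BanachAlgebra

variable {𝔸 : Type*} [NormedRing 𝔸] [CompleteSpace 𝔸]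

theorem exists_pos_norm_pow_lt_one_of_spectralRadius_lt_one [NormedAlgebra ℂ 𝔸] {b : 𝔸}
    (h : spectralRadius ℂ b < 1) : ∃ N : ℕ, 0 < N ∧ ‖b ^ N‖ < 1 := by
  obtain ⟨N, hlt, hN⟩ := (((spectrum.pow_nnnorm_pow_one_div_tendsto_nhds_spectralRadius
    b).eventually (gt_mem_nhds h)).and (eventually_gt_atTop 0)).exists
  have : (‖b ^ N‖₊ : ENNReal) < 1 :=
    lt_of_not_ge fun h1 => (ENNReal.one_le_rpow h1 (by positivity)).not_gt hlt
  exact ⟨N, hN, by exact_mod_cast this⟩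

section RCLike

variable {𝕜 : Type*} [RCLike 𝕜] [NormedAlgebra 𝕜 𝔸]

theorem norm_exp_ofReal_smul_add_mul_le (a : 𝔸) (s T : ℝ) (k : ℕ) :
    ‖exp (((s + k * T : ℝ) : 𝕜) • a)‖ ≤ ‖exp ((s : 𝕜) • a)‖ * ‖exp ((T : 𝕜) • a)‖ ^ k := by
  let : NormedAlgebra ℚ 𝔸 := NormedAlgebra.restrictScalars ℚ 𝕜 𝔸
  induction k with
  | zero => simp
  | succ k ih =>
    have hsplit : exp (((s + (k + 1 : ℕ) * T : ℝ) : 𝕜) • a) =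
        exp (((s + k * T : ℝ) : 𝕜) • a) * exp ((T : 𝕜) • a) := by
      rw [← NormedSpace.exp_add_of_commute (((Commute.refl a).smul_left _).smul_right _),
        ← add_smul]
      push_cast
      ring_nf
    rw [hsplit, pow_succ, ← mul_assoc]
    exact (norm_mul_le _ _).trans (by gcongr)

theorem exists_norm_exp_ofReal_smul_le_of_norm_exp_lt_one (a : 𝔸) {T : ℝ} (hT : 0 < T)
    (h : ‖exp ((T : 𝕜) • a)‖ < 1) :
    ∃ ε > 0, ∃ C, ∀ t : ℝ, 0 ≤ t → ‖exp ((t : 𝕜) • a)‖ ≤ C * Real.exp (-ε * t) := by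
  let : NormedAlgebra ℚ 𝔸 := NormedAlgebra.restrictScalars ℚ 𝕜 𝔸
  have hcont : Continuous fun s : ℝ => exp ((s : 𝕜) • a) :=
    exp_continuous.comp (RCLike.continuous_ofReal.smul continuous_const)
  obtain ⟨M, hM⟩ := (isCompact_Icc (a := 0) (b := T)).exists_bound_of_continuousOn
    hcont.continuousOn
  -- bounded away from `0`, so that `Real.log r < 0`
  set r := max ‖exp ((T : 𝕜) • a)‖ (1 / 2)
  have hr0 : 0 < r := lt_max_of_lt_right (by norm_num)
  have hr1 : r < 1 := max_lt h (by norm_num)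
  refine ⟨-Real.log r / T, div_pos (neg_pos.mpr (Real.log_neg hr0 hr1)) hT, M * r⁻¹,
    fun t ht => ?_⟩
  set k := ⌊t / T⌋₊
  have hkT : k * T ≤ t := (le_div_iff₀ hT).mp (Nat.floor_le (div_nonneg ht hT.le))
  have hs : t - k * T ∈ Icc 0 T := by
    refine ⟨sub_nonneg.mpr hkT, ?_⟩
    have := (div_lt_iff₀ hT).mp (Nat.lt_floor_add_one (t / T))
    nlinarith
  have hM0 : 0 ≤ M := (norm_nonneg _).trans (hM _ hs)
  calc ‖exp ((t : 𝕜) • a)‖ = ‖exp (((t - k * T + k * T : ℝ) : 𝕜) • a)‖ := by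
        rw [sub_add_cancel]
    _ ≤ M * r ^ k := by
        refine (norm_exp_ofReal_smul_add_mul_le a _ T k).trans ?_
        gcongr
        exacts [hM _ hs, le_max_left _ _]
    _ ≤ M * (r⁻¹ * r ^ (t / T)) := by gcongr; exact pow_floor_le_inv_mul_rpow hr0 hr1.le
    _ = M * r⁻¹ * Real.exp (-(-Real.log r / T) * t) := by
        rw [Real.rpow_def_of_pos hr0]; ring_nf

end RCLike

theorem exists_norm_exp_ofReal_smul_le_of_spectralRadius_exp_lt_one [NormedAlgebra ℂ 𝔸]
    (a : 𝔸) (h : spectralRadius ℂ (exp a) < 1) :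
    ∃ ε > 0, ∃ C, ∀ t : ℝ, 0 ≤ t → ‖exp ((t : ℂ) • a)‖ ≤ C * Real.exp (-ε * t) := by
  let : NormedAlgebra ℚ 𝔸 := NormedAlgebra.restrictScalars ℚ ℂ 𝔸
  obtain ⟨N, hN, hlt⟩ := exists_pos_norm_pow_lt_one_of_spectralRadius_lt_one h
  refine exists_norm_exp_ofReal_smul_le_of_norm_exp_lt_one a (Nat.cast_pos.mpr hN) ?_
  rwa [RCLike.ofReal_natCast, Nat.cast_smul_eq_nsmul, NormedSpace.exp_nsmul]

theorem hasDerivAt_exp_smul_mul_mul_exp_smul [NormedAlgebra ℝ 𝔸] (a q b : 𝔸) (t : ℝ) :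
    HasDerivAt (fun s : ℝ => exp (s • a) * q * exp (s • b))
      (a * (exp (t • a) * q * exp (t • b)) + exp (t • a) * q * exp (t • b) * b) t := by
  refine (((hasDerivAt_exp_smul_const' a t).mul_const q).mul
    (hasDerivAt_exp_smul_const b t)).congr_deriv ?_
  simp only [mul_assoc]

end BanachAlgebra

theorem integrableOn_Ioi_of_norm_le_mul_exp_neg {E : Type*} [NormedAddCommGroup E]
    {f : ℝ → E} {C ε : ℝ} (hε : 0 < ε) (hf : Continuous f)
    (hle : ∀ t : ℝ, 0 ≤ t → ‖f t‖ ≤ C * Real.exp (-ε * t)) : IntegrableOn f (Ioi 0) := by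
  refine ((exp_neg_integrableOn_Ioi 0 hε).const_mul C).mono' hf.aestronglyMeasurable ?_
  filter_upwards [ae_restrict_mem measurableSet_Ioi] with t ht
  exact hle t ht.le

theorem ContinuousLinearMap.map_integral_Ioi_eq_neg_of_hasDerivAt {E : Type*}
    [NormedAddCommGroup E] [NormedSpace ℝ E] [CompleteSpace E] (L : E →L[ℝ] E) {g : ℝ → E}
    (hg : ∀ t, HasDerivAt g (L (g t)) t) (hint : IntegrableOn g (Ioi 0)) :
    L (∫ t in Ioi 0, g t) = -g 0 := by
  have hint' : IntegrableOn (fun t => L (g t)) (Ioi 0) := L.integrable_comp hint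
  have hlim : Tendsto g atTop (nhds 0) :=
    tendsto_zero_of_hasDerivAt_of_integrableOn_Ioi (fun t _ => hg t) hint' hint
  rw [← L.integral_comp_comm hint,
    integral_Ioi_of_hasDerivAt_of_tendsto' (fun t _ => hg t) hint' hlim, zero_sub]

namespace Matrix

variable {ι : Type*} [Fintype ι] [DecidableEq ι]

theorem norm_mul_le_card_mul_norm_mul_norm {l m n α : Type*} [Fintype l] [Fintype m]
    [Fintype n] [NonUnitalNormedRing α] (X : Matrix l m α) (Y : Matrix m n α) :
    ‖X * Y‖ ≤ Fintype.card m * ‖X‖ * ‖Y‖ := by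
  refine (norm_le_iff (by positivity)).mpr fun i j => ?_
  calc ‖(X * Y) i j‖ ≤ ∑ k, ‖X i k‖ * ‖Y k j‖ :=
        (norm_sum_le _ _).trans (Finset.sum_le_sum fun k _ => norm_mul_le _ _)
    _ ≤ ∑ _k : m, ‖X‖ * ‖Y‖ := by
        gcongr <;> exact norm_entry_le_entrywise_sup_norm _
    _ = Fintype.card m * ‖X‖ * ‖Y‖ := by
        rw [Finset.sum_const, Finset.card_univ, nsmul_eq_mul, mul_assoc]

-- The entrywise sup norm in force is not submultiplicative; the Banach-algebra arguments use
-- the `ℓ∞` operator norm instead.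
section LinftyOp

open scoped Matrix.Norms.Operator

theorem norm_entry_le_linfty_opNorm {m n α : Type*} [Fintype m] [Fintype n]
    [SeminormedAddCommGroup α] (X : Matrix m n α) (i : m) (j : n) : ‖X i j‖ ≤ ‖X‖ := by
  rw [linfty_opNorm_def]
  have : ‖X i j‖₊ ≤ ∑ k, ‖X i k‖₊ :=
    Finset.single_le_sum (f := fun k => ‖X i k‖₊) (fun _ _ => zero_le) (Finset.mem_univ j)
  exact_mod_cast this.trans (Finset.le_sup (f := fun i => ∑ k, ‖X i k‖₊) (Finset.mem_univ i))

theorem map_ofReal_exp (X : Matrix ι ι ℝ) :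
    (exp X).map Complex.ofReal = exp (X.map Complex.ofReal) :=
  map_exp Complex.ofRealHom.mapMatrix (continuous_id.matrix_map Complex.continuous_ofReal) X

theorem exp_mulVec_of_mulVec_eq_smul {M : Matrix ι ι ℂ} {μ : ℂ} {v : ι → ℂ}
    (h : M *ᵥ v = μ • v) : exp M *ᵥ v = Complex.exp μ • v := by
  have hpow : ∀ k : ℕ, M ^ k *ᵥ v = μ ^ k • v := by
    intro k
    induction k with
    | zero => simp
    | succ k ih => rw [pow_succ, ← mulVec_mulVec, h, mulVec_smul, ih, smul_smul, ← pow_succ']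
  have hM := (exp_series_hasSum_exp' (𝕂 := ℂ) M).map (mulVec.addMonoidHomLeft v)
    (continuous_id.matrix_mulVec continuous_const)
  have hμ := (exp_series_hasSum_exp' (𝕂 := ℂ) μ).smul_const v
  rw [← Complex.exp_eq_exp_ℂ] at hμ
  refine hM.unique (hμ.congr_fun fun k => ?_)
  simp [mulVec.addMonoidHomLeft, smul_mulVec, hpow, smul_smul]

end LinftyOp

theorem exists_exp_eq_of_mem_spectrum_exp {M : Matrix ι ι ℂ} {ν : ℂ}
    (hν : ν ∈ spectrum ℂ (exp M)) : ∃ μ ∈ spectrum ℂ M, Complex.exp μ = ν := by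
  set f : Module.End ℂ (ι → ℂ) := toLinAlgEquiv' M
  set g : Module.End ℂ (ι → ℂ) := toLinAlgEquiv' (exp M)
  have hg : g.HasEigenvalue ν := by
    rwa [Module.End.hasEigenvalue_iff_mem_spectrum, AlgEquiv.spectrum_eq]
  have hmaps : MapsTo f (g.eigenspace ν) (g.eigenspace ν) :=
    Module.End.mapsTo_genEigenspace_of_comm ((Commute.refl M).exp_left.map toLinAlgEquiv') ν 1
  have : Nontrivial (g.eigenspace ν) := Submodule.nontrivial_iff_ne_bot.mpr hg
  obtain ⟨μ, hμ⟩ := Module.End.exists_eigenvalue (f.restrict hmaps)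
  obtain ⟨⟨w, hwg⟩, hw⟩ := hμ.exists_hasEigenvector
  have hw0 : w ≠ 0 := by simpa using hw.2
  have hwf : M *ᵥ w = μ • w := congrArg Subtype.val hw.apply_eq_smul
  refine ⟨μ, ?_, smul_left_injective ℂ hw0 ?_⟩
  · rw [← AlgEquiv.spectrum_eq toLinAlgEquiv', ← Module.End.hasEigenvalue_iff_mem_spectrum]
    exact Module.End.hasEigenvalue_of_hasEigenvector
      ⟨Module.End.mem_eigenspace_iff.mpr hwf, hw0⟩
  · exact (exp_mulVec_of_mulVec_eq_smul hwf).symm.trans (Module.End.mem_eigenspace_iff.mp hwg)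

theorem spectralRadius_exp_lt_one {M : Matrix ι ι ℂ} (hM : ∀ μ ∈ spectrum ℂ M, μ.re < 0) :
    spectralRadius ℂ (exp M) < 1 := by
  open scoped Matrix.Norms.Operator in
  rcases (spectrum ℂ (exp M)).eq_empty_or_nonempty with h | h
  · simp [spectralRadius, h]
  · refine spectrum.spectralRadius_lt_of_forall_lt_of_nonempty h fun ν hν => ?_
    obtain ⟨μ, hμ, rfl⟩ := exists_exp_eq_of_mem_spectrum_exp hν
    rw [← NNReal.coe_lt_coe]
    simpa [Complex.norm_exp] using hM μ hμ

theorem exists_norm_exp_smul_le_of_re_neg (A : Matrix ι ι ℝ)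
    (hA : ∀ μ ∈ spectrum ℂ (A.map Complex.ofReal), μ.re < 0) :
    ∃ ε > 0, ∃ C, ∀ t : ℝ, 0 ≤ t → ‖exp (t • A)‖ ≤ C * Real.exp (-ε * t) := by
  open scoped Matrix.Norms.Operator in
  obtain ⟨ε, hε, C, hC⟩ :=
    exists_norm_exp_ofReal_smul_le_of_spectralRadius_exp_lt_one (A.map Complex.ofReal)
      (spectralRadius_exp_lt_one hA)
  refine ⟨ε, hε, C, fun t ht => ?_⟩
  have hC0 : 0 ≤ C * Real.exp (-ε * t) := (norm_nonneg _).trans (hC t ht)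
  refine (norm_le_iff hC0).mpr fun i j => ?_
  have hmap : (t • A).map Complex.ofReal = (t : ℂ) • A.map Complex.ofReal := by
    ext; simp
  calc ‖exp (t • A) i j‖ = ‖(exp (t • A)).map Complex.ofReal i j‖ := by simp
    _ ≤ _ := by rw [map_ofReal_exp, hmap]; exact norm_entry_le_linfty_opNorm _ i j
    _ ≤ _ := hC t ht

theorem hasDerivAt_exp_smul_mul_mul_exp_smul_transpose (A Q : Matrix ι ι ℝ) (t : ℝ) :
    HasDerivAt (fun s : ℝ => exp (s • A) * Q * exp (s • Aᵀ))
      (A * (exp (t • A) * Q * exp (t • Aᵀ)) + exp (t • A) * Q * exp (t • Aᵀ) * Aᵀ) t := by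
  open scoped Matrix.Norms.Operator in
  exact hasDerivAt_exp_smul_mul_mul_exp_smul A Q Aᵀ t

theorem exists_norm_exp_smul_mul_mul_exp_smul_transpose_le_of_re_neg (A Q : Matrix ι ι ℝ)
    (hA : ∀ μ ∈ spectrum ℂ (A.map Complex.ofReal), μ.re < 0) :
    ∃ ε > 0, ∃ C, ∀ t : ℝ, 0 ≤ t →
      ‖exp (t • A) * Q * exp (t • Aᵀ)‖ ≤ C * Real.exp (-ε * t) := by
  obtain ⟨ε, hε, C, hC⟩ := exists_norm_exp_smul_le_of_re_neg A hA
  refine ⟨2 * ε, by positivity, Fintype.card ι ^ 2 * ‖Q‖ * C ^ 2, fun t ht => ?_⟩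
  have hT : ‖exp (t • Aᵀ)‖ = ‖exp (t • A)‖ := by
    rw [← transpose_smul, exp_transpose, norm_transpose]
  calc ‖exp (t • A) * Q * exp (t • Aᵀ)‖
      ≤ Fintype.card ι * (Fintype.card ι * ‖exp (t • A)‖ * ‖Q‖) * ‖exp (t • Aᵀ)‖ := by
        refine (norm_mul_le_card_mul_norm_mul_norm _ _).trans ?_
        gcongr
        exact norm_mul_le_card_mul_norm_mul_norm _ _
    _ = Fintype.card ι ^ 2 * ‖Q‖ * ‖exp (t • A)‖ ^ 2 := by rw [hT]; ring
    _ ≤ Fintype.card ι ^ 2 * ‖Q‖ * (C * Real.exp (-ε * t)) ^ 2 := by gcongr; exact hC t ht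
    _ = _ := by rw [mul_pow, ← Real.exp_nat_mul]; push_cast; ring_nf

end Matrix

theorem lyapunov_integral_solves_fdr_general {n : ℕ} (A Q : Matrix (Fin n) (Fin n) ℝ)
    (hA : ∀ μ : ℂ, ((A.map (Complex.ofReal)).charpoly).IsRoot μ → μ.re < 0) :
    @IntegrableOn ℝ (Matrix (Fin n) (Fin n) ℝ) _ _ SeminormedAddGroup.toContinuousENorm
      (fun t : ℝ => exp (t • A) * Q * exp (t • Aᵀ)) (Set.Ici 0) volume ∧
    (0 : Matrix (Fin n) (Fin n) ℝ) =
      A * ((2 : ℝ) • ∫ t in Set.Ici (0 : ℝ), exp (t • A) * Q * exp (t • Aᵀ)) +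
      ((2 : ℝ) • ∫ t in Set.Ici (0 : ℝ), exp (t • A) * Q * exp (t • Aᵀ)) * Aᵀ +
      (2 : ℝ) • Q := by
  have hderiv := hasDerivAt_exp_smul_mul_mul_exp_smul_transpose A Q
  obtain ⟨ε, hε, C, hC⟩ := exists_norm_exp_smul_mul_mul_exp_smul_transpose_le_of_re_neg A Q
    fun μ hμ => hA μ (mem_spectrum_iff_isRoot_charpoly.mp hμ)
  have hint := integrableOn_Ioi_of_norm_le_mul_exp_neg hε
    (continuous_iff_continuousAt.mpr fun t => (hderiv t).continuousAt) hC
  refine ⟨(integrableOn_Ici_iff_integrableOn_Ioi).mpr hint, ?_⟩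
  let L : Matrix (Fin n) (Fin n) ℝ →L[ℝ] Matrix (Fin n) (Fin n) ℝ :=
    (LinearMap.mulLeft ℝ A + LinearMap.mulRight ℝ Aᵀ).toContinuousLinearMap
  have hL : A * (∫ t in Ioi (0 : ℝ), exp (t • A) * Q * exp (t • Aᵀ)) +
      (∫ t in Ioi (0 : ℝ), exp (t • A) * Q * exp (t • Aᵀ)) * Aᵀ = -Q := by
    have := L.map_integral_Ioi_eq_neg_of_hasDerivAt hderiv hint
    rwa [zero_smul, zero_smul, NormedSpace.exp_zero, one_mul, mul_one] at this
  rw [integral_Ici_eq_integral_Ioi, mul_smul_comm, smul_mul_assoc, ← smul_add, ← smul_add, hL,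
    neg_add_cancel, smul_zero]

/-- For a real Hurwitz matrix `A` and a symmetric matrix `Q`, the function
`t ↦ exp (t • A) * Q * exp (t • Aᵀ)` is integrable on `[0, ∞)`, and the matrix
`C := 2 • ∫ t in Ici 0, exp (t • A) * Q * exp (t • Aᵀ)` satisfies the
fluctuation–dissipation relation `0 = A * C + C * Aᵀ + 2 • Q`. -/
theorem lyapunov_integral_solves_fdr {n : ℕ} (A Q : Matrix (Fin n) (Fin n) ℝ)
    (hA : ∀ μ : ℂ, ((A.map (Complex.ofReal)).charpoly).IsRoot μ → μ.re < 0)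
    (hQ : Qᵀ = Q) :
    @IntegrableOn ℝ (Matrix (Fin n) (Fin n) ℝ) _ _ SeminormedAddGroup.toContinuousENorm
      (fun t : ℝ => exp (t • A) * Q * exp (t • Aᵀ)) (Set.Ici 0) volume ∧
    (0 : Matrix (Fin n) (Fin n) ℝ) =
      A * ((2 : ℝ) • ∫ t in Set.Ici (0 : ℝ), exp (t • A) * Q * exp (t • Aᵀ)) +
      ((2 : ℝ) • ∫ t in Set.Ici (0 : ℝ), exp (t • A) * Q * exp (t • Aᵀ)) * Aᵀ +
      (2 : ℝ) • Q :=
  lyapunov_integral_solves_fdr_general A Q hA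
end

section
/- Let A be an n×n real Hurwitz matrix, τ > 0, and R an n×n real symmetric positive-semidefinite matrix. Let B = (I − τA)⁻¹, M = [[A, R], [0, −τ⁻¹I]] and D = [[0, 0], [0, (2τ²)⁻¹I]] (2n×2n block matrices). Suppose Σ is a symmetric 2n×2n real matrix with n×n blocks Σ = [[Σxx, Σxη], [Σηx, Σηη]] satisfying the stationary Lyapunov equation M·Σ + Σ·Mᵀ + 2D = 0. Then Σηη = (2τ)⁻¹·I and Σxη = ½·B·R (equivalently, Σηx = ½·R·Bᵀ). -/
open Matrix Polynomial

lemma charpoly_eval' {m : Type*} [Fintype m] [DecidableEq m] (M : Matrix m m ℂ) (r : ℂ) :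
    M.charpoly.eval r = (r • (1 : Matrix m m ℂ) - M).det := by
  rw [Matrix.charpoly, ← coe_evalRingHom, RingHom.map_det]
  congr 1
  ext i j
  by_cases h : i = j <;>
    simp [charmatrix_apply, Matrix.diagonal_apply, Matrix.one_apply, h, Matrix.smul_apply]

lemma hurwitz_det_ne {n : ℕ} (A : Matrix (Fin n) (Fin n) ℝ) (τ : ℝ) (hτ : 0 < τ)
    (hA : ∀ μ : ℂ, ((A.map (Complex.ofReal)).charpoly).IsRoot μ → μ.re < 0) :
    (1 - τ • A).det ≠ 0 := by
  intro h
  set A' : Matrix (Fin n) (Fin n) ℂ := A.map Complex.ofReal with hA'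
  have hmap : ((1 - τ • A).map Complex.ofReal) =
      (1 : Matrix (Fin n) (Fin n) ℂ) - (τ : ℂ) • A' := by
    ext i j
    by_cases hij : i = j <;>
      simp [hA', Matrix.one_apply, hij, Matrix.smul_apply, Matrix.sub_apply, Matrix.map_apply]
  have hdet0 : ((1 : Matrix (Fin n) (Fin n) ℂ) - (τ : ℂ) • A').det = 0 := by
    rw [← hmap,
      show (1 - τ • A).map Complex.ofReal = (Complex.ofRealHom : ℝ →+* ℂ).mapMatrix (1 - τ • A)
        from rfl, ← RingHom.map_det, h, map_zero]
  have hτC : (τ : ℂ) ≠ 0 := by exact_mod_cast hτ.ne'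
  have hfac : (1 : Matrix (Fin n) (Fin n) ℂ) - (τ : ℂ) • A'
      = (τ : ℂ) • (((τ : ℂ)⁻¹ • 1) - A') := by
    rw [smul_sub, smul_smul, mul_inv_cancel₀ hτC]
    simp
  rw [hfac, Matrix.det_smul] at hdet0
  have hdet1 : (((τ : ℂ)⁻¹ • (1 : Matrix (Fin n) (Fin n) ℂ)) - A').det = 0 := by
    have hp := pow_ne_zero (Fintype.card (Fin n)) hτC
    exact (mul_eq_zero.mp hdet0).resolve_left hp
  have hroot : (A'.charpoly).IsRoot ((τ : ℂ)⁻¹) := by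
    rw [Polynomial.IsRoot, charpoly_eval', hdet1]
  have := hA ((τ : ℂ)⁻¹) hroot
  rw [← Complex.ofReal_inv] at this
  simp only [Complex.ofReal_re] at this
  linarith [inv_pos.mpr hτ]

/-- For the joint Lyapunov equation of the colored-noise system: if `A` is Hurwitz, `τ > 0`,
`R` is symmetric positive semidefinite, `B = (I - τ • A)⁻¹`, `M = [[A, R], [0, -τ⁻¹ • I]]`,
`D = [[0,0],[0,(2τ²)⁻¹ • I]]` and the symmetric matrix `Σ = [[Σxx, Σxη], [Σηx, Σηη]]`
satisfies `M * Σ + Σ * Mᵀ + 2 • D = 0`, then `Σηη = (2τ)⁻¹ • I` and `Σxη = ½ • (B * R)`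
(equivalently `Σηx = ½ • (R * Bᵀ)`). -/
theorem colored_noise_cross_covariance {n : ℕ} (A R : Matrix (Fin n) (Fin n) ℝ) (τ : ℝ)
    (hτ : 0 < τ)
    (hA : ∀ μ : ℂ, ((A.map (Complex.ofReal)).charpoly).IsRoot μ → μ.re < 0)
    (hR : R.PosSemidef)
    (Sxx Sxη Sηx Sηη : Matrix (Fin n) (Fin n) ℝ)
    (hsymm : (fromBlocks Sxx Sxη Sηx Sηη)ᵀ = fromBlocks Sxx Sxη Sηx Sηη)
    (hlyap :
      fromBlocks A R 0 (-τ⁻¹ • 1) * fromBlocks Sxx Sxη Sηx Sηη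
        + fromBlocks Sxx Sxη Sηx Sηη * (fromBlocks A R 0 (-τ⁻¹ • 1))ᵀ
        + (2 : ℝ) • fromBlocks 0 0 0 ((2 * τ ^ 2)⁻¹ • 1) = 0) :
    Sηη = (2 * τ)⁻¹ • (1 : Matrix (Fin n) (Fin n) ℝ) ∧
    Sxη = (1 / 2 : ℝ) • ((1 - τ • A)⁻¹ * R) ∧
    Sηx = (1 / 2 : ℝ) • (R * ((1 - τ • A)⁻¹)ᵀ) := by
  have hτ' : τ ≠ 0 := hτ.ne'
  rw [Matrix.fromBlocks_transpose, Matrix.fromBlocks_multiply, Matrix.fromBlocks_multiply,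
    Matrix.fromBlocks_smul, ← Matrix.fromBlocks_zero, Matrix.fromBlocks_add,
    Matrix.fromBlocks_add, Matrix.fromBlocks_inj] at hlyap
  obtain ⟨h11, h12, h21, h22⟩ := hlyap
  rw [Matrix.fromBlocks_transpose, Matrix.fromBlocks_inj] at hsymm
  obtain ⟨-, hs12, -, -⟩ := hsymm
  simp only [Matrix.transpose_smul, Matrix.transpose_neg, Matrix.transpose_one,
    Matrix.transpose_zero, Matrix.smul_mul, Matrix.mul_smul, Matrix.one_mul, Matrix.mul_one,
    Matrix.neg_mul, Matrix.mul_neg, Matrix.mul_zero, Matrix.zero_mul, smul_smul, neg_smul,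
    smul_zero, add_zero, zero_add] at h12 h22
  -- Step 1: the ηη block
  have key : Sηη = (2 * τ)⁻¹ • (1 : Matrix (Fin n) (Fin n) ℝ) := by
    have h2 : ((2:ℝ) * τ⁻¹) • Sηη
        = ((2:ℝ) * τ⁻¹) • ((2 * τ)⁻¹ • (1 : Matrix (Fin n) (Fin n) ℝ)) := by
      rw [smul_smul]
      have he : (2:ℝ) * τ⁻¹ * (2 * τ)⁻¹ = (2:ℝ) * (2 * τ ^ 2)⁻¹ := by
        field_simp
      rw [he]
      linear_combination (norm := module) -h22
    exact smul_right_injective _ (by positivity) h2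
  -- Step 2: the xη block
  rw [key] at h12
  simp only [Matrix.mul_smul, Matrix.mul_one] at h12
  have hASxη : A * Sxη = τ⁻¹ • Sxη - (2 * τ)⁻¹ • R := by
    linear_combination (norm := module) h12
  have hfact : (1 - τ • A) * Sxη = (1 / 2 : ℝ) • R := by
    rw [Matrix.sub_mul, Matrix.one_mul, Matrix.smul_mul, hASxη, smul_sub, smul_smul, smul_smul,
      mul_inv_cancel₀ hτ', one_smul]
    have he : τ * (2 * τ)⁻¹ = (1 / 2 : ℝ) := by field_simp
    rw [he]
    abel
  have hdet : IsUnit (1 - τ • A).det := (hurwitz_det_ne A τ hτ hA).isUnit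
  haveI := (1 - τ • A).invertibleOfIsUnitDet hdet
  have hxη : Sxη = (1 / 2 : ℝ) • ((1 - τ • A)⁻¹ * R) := by
    have := congrArg (fun X => (1 - τ • A)⁻¹ * X) hfact
    simpa [← Matrix.mul_assoc, Matrix.nonsing_inv_mul _ hdet, Matrix.mul_smul] using this
  refine ⟨key, hxη, ?_⟩
  -- Step 3: the ηx block via symmetry
  have hRT : Rᵀ = R := hR.1
  calc Sηx = Sxηᵀ := by rw [← hs12, transpose_transpose]
    _ = (1 / 2 : ℝ) • (R * ((1 - τ • A)⁻¹)ᵀ) := by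
        rw [hxη, Matrix.transpose_smul, Matrix.transpose_mul, hRT]
end

section
/- Let A be an n×n real Hurwitz matrix, τ > 0, Q an n×n real symmetric positive-semidefinite matrix, and R a symmetric positive-semidefinite matrix with R·R = 2Q (so R = √(2Q)). Let B = (I − τA)⁻¹, M = [[A, R], [0, −τ⁻¹I]], D = [[0, 0], [0, (2τ²)⁻¹I]]. If Σ = [[C, Σxη], [Σηx, Σηη]] is a symmetric 2n×2n real matrix satisfying M·Σ + Σ·Mᵀ + 2D = 0, then the top-left block C = Σxx satisfies the generalized fluctuation–dissipation relation 0 = A·C + C·Aᵀ + Q·Bᵀ + B·Q. -/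
open Matrix

/-!
Read the Lyapunov equation block by block. The `ηη` block says that the noise alone has
stationary covariance `Σηη = (2τ)⁻¹ I`. The `xη` block then becomes the Sylvester equation
`(I - τA) Σxη = R / 2`; it is uniquely solvable because `I - τA` is singular only when `τ⁻¹ > 0` is
an eigenvalue of `A`, which the Hurwitz condition forbids. Substituting `Σxη = BR / 2` and
`Σηx = Σxηᵀ` into the `xx` block, `R R = 2Q` turns the cross terms into `QBᵀ + BQ`.
-/

namespace Matrix

lemma fromBlocks_lyapunov_eq_zero_iff {l m K : Type*} [Fintype l] [Fintype m]
    [NonUnitalNonAssocSemiring K] (A : Matrix l l K) (R : Matrix l m K) (N : Matrix m m K)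
    (C : Matrix l l K) (X : Matrix l m K) (Y : Matrix m l K) (S G : Matrix m m K) :
    fromBlocks A R 0 N * fromBlocks C X Y S + fromBlocks C X Y S * (fromBlocks A R 0 N)ᵀ
        + fromBlocks 0 0 0 G = 0 ↔
      A * C + R * Y + (C * Aᵀ + X * Rᵀ) = 0 ∧ A * X + R * S + X * Nᵀ = 0 ∧
        N * Y + (Y * Aᵀ + S * Rᵀ) = 0 ∧ N * S + S * Nᵀ + G = 0 := by
  rw [fromBlocks_transpose, fromBlocks_multiply, fromBlocks_multiply, fromBlocks_add,
    fromBlocks_add, ← fromBlocks_zero, fromBlocks_inj]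
  simp

variable {m K : Type*} [Fintype m] [DecidableEq m] [Field K]

lemma det_one_sub_smul_ne_zero (M : Matrix m m K) {t : K}
    (ht : ¬ M.charpoly.IsRoot t⁻¹) : (1 - t • M).det ≠ 0 := by
  rcases eq_or_ne t 0 with rfl | ht0
  · simp
  have : 1 - t • M = t • (scalar m t⁻¹ - M) := by
    rw [smul_sub, scalar_apply, ← smul_one_eq_diagonal, smul_smul, mul_inv_cancel₀ ht0, one_smul]
  rw [this, det_smul, ← eval_charpoly]
  exact mul_ne_zero (pow_ne_zero _ ht0) ht

lemma isUnit_det_one_sub_smul_of_forall_re_neg (A : Matrix m m ℝ)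
    (hA : ∀ μ : ℂ, (A.map Complex.ofReal).charpoly.IsRoot μ → μ.re < 0) {τ : ℝ} (hτ : 0 ≤ τ) :
    IsUnit (1 - τ • A).det := by
  refine isUnit_iff_ne_zero.mpr (A.det_one_sub_smul_ne_zero fun hroot => ?_)
  have := hA (τ⁻¹ : ℝ) <| by
    rw [show A.map Complex.ofReal = A.map Complex.ofRealHom from rfl, charpoly_map]
    exact hroot.map
  exact (inv_nonneg.mpr hτ).not_gt (by simpa using this)

variable {τ : K}

lemma eq_of_lyapunov_neg_inv_smul_one [NeZero (2 : K)] (hτ : τ ≠ 0) {S : Matrix m m K}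
    (h : (-τ⁻¹ • 1) * S + S * (-τ⁻¹ • 1 : Matrix m m K)ᵀ + (2 : K) • (2 * τ ^ 2)⁻¹ • 1 = 0) :
    S = (2 * τ)⁻¹ • 1 := by
  simp only [transpose_smul, transpose_one, smul_mul, Matrix.mul_smul, one_mul, mul_one] at h
  linear_combination (norm := match_scalars) (-τ / 2) • h
  all_goals (field_simp; ring)

lemma eq_inv_two_smul_inv_mul_of_sylvester (hτ : τ ≠ 0) {A : Matrix m m K}
    (hA : IsUnit (1 - τ • A).det) {R X : Matrix m m K}
    (h : A * X + R * (2 * τ)⁻¹ • 1 + X * (-τ⁻¹ • 1 : Matrix m m K)ᵀ = 0) :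
    X = (2 : K)⁻¹ • ((1 - τ • A)⁻¹ * R) := by
  have hX : (1 - τ • A) * X = (2 : K)⁻¹ • R := by
    simp only [transpose_smul, transpose_one, smul_mul, Matrix.mul_smul, one_mul, mul_one,
      sub_mul] at h ⊢
    linear_combination (norm := match_scalars) (-τ) • h
    all_goals (field_simp; ring)
  rw [← Matrix.mul_smul, ← hX, ← Matrix.mul_assoc, nonsing_inv_mul _ hA, one_mul]

end Matrix

theorem generalized_fluctuation_dissipation_general {n : ℕ} (A Q R : Matrix (Fin n) (Fin n) ℝ) (τ : ℝ)
    (hτ : 0 < τ)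
    (hA : ∀ μ : ℂ, ((A.map (Complex.ofReal)).charpoly).IsRoot μ → μ.re < 0)
    (hR : R.PosSemidef) (hRQ : R * R = (2 : ℝ) • Q)
    (C Sxη Sηx Sηη : Matrix (Fin n) (Fin n) ℝ)
    (hsymm : (fromBlocks C Sxη Sηx Sηη)ᵀ = fromBlocks C Sxη Sηx Sηη)
    (hlyap :
      fromBlocks A R 0 (-τ⁻¹ • 1) * fromBlocks C Sxη Sηx Sηη
        + fromBlocks C Sxη Sηx Sηη * (fromBlocks A R 0 (-τ⁻¹ • 1))ᵀ
        + (2 : ℝ) • fromBlocks 0 0 0 ((2 * τ ^ 2)⁻¹ • 1) = 0) :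
    (0 : Matrix (Fin n) (Fin n) ℝ) =
      A * C + C * Aᵀ + Q * ((1 - τ • A)⁻¹)ᵀ + (1 - τ • A)⁻¹ * Q := by
  set B := (1 - τ • A)⁻¹
  have hRsymm : Rᵀ = R := isHermitian_iff_isSymm.mp hR.isHermitian
  rw [fromBlocks_transpose, fromBlocks_inj] at hsymm
  obtain ⟨-, -, hSηx, -⟩ := hsymm
  rw [fromBlocks_smul, smul_zero, fromBlocks_lyapunov_eq_zero_iff] at hlyap
  obtain ⟨h11, h12, -, h22⟩ := hlyap
  rw [eq_of_lyapunov_neg_inv_smul_one hτ.ne' h22] at h12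
  have hSxη : Sxη = (2 : ℝ)⁻¹ • (B * R) := eq_inv_two_smul_inv_mul_of_sylvester hτ.ne'
    (isUnit_det_one_sub_smul_of_forall_re_neg A hA hτ.le) h12
  have hRSηx : R * Sηx = Q * Bᵀ := by
    rw [← hSηx, hSxη, transpose_smul, transpose_mul, hRsymm, Matrix.mul_smul, ← Matrix.mul_assoc,
      hRQ, smul_mul, smul_smul]
    norm_num
  have hSxηR : Sxη * Rᵀ = B * Q := by
    rw [hRsymm, hSxη, smul_mul, Matrix.mul_assoc, hRQ, Matrix.mul_smul, smul_smul]
    norm_num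
  rw [hRSηx, hSxηR] at h11
  rw [← h11]
  abel

/-- Generalized fluctuation–dissipation relation: if `A` is Hurwitz, `τ > 0`, `Q` is symmetric
positive semidefinite, `R` is symmetric positive semidefinite with `R * R = 2 • Q`
(so `R = √(2Q)`), `B = (I - τ • A)⁻¹`, and the symmetric matrix
`Σ = [[C, Σxη], [Σηx, Σηη]]` satisfies the block Lyapunov equation
`M * Σ + Σ * Mᵀ + 2 • D = 0` with `M = [[A, R], [0, -τ⁻¹ • I]]` and
`D = [[0,0],[0,(2τ²)⁻¹ • I]]`, then `0 = A * C + C * Aᵀ + Q * Bᵀ + B * Q`. -/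
theorem generalized_fluctuation_dissipation {n : ℕ} (A Q R : Matrix (Fin n) (Fin n) ℝ) (τ : ℝ)
    (hτ : 0 < τ)
    (hA : ∀ μ : ℂ, ((A.map (Complex.ofReal)).charpoly).IsRoot μ → μ.re < 0)
    (hQ : Q.PosSemidef) (hR : R.PosSemidef) (hRQ : R * R = (2 : ℝ) • Q)
    (C Sxη Sηx Sηη : Matrix (Fin n) (Fin n) ℝ)
    (hsymm : (fromBlocks C Sxη Sηx Sηη)ᵀ = fromBlocks C Sxη Sηx Sηη)
    (hlyap :
      fromBlocks A R 0 (-τ⁻¹ • 1) * fromBlocks C Sxη Sηx Sηη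
        + fromBlocks C Sxη Sηx Sηη * (fromBlocks A R 0 (-τ⁻¹ • 1))ᵀ
        + (2 : ℝ) • fromBlocks 0 0 0 ((2 * τ ^ 2)⁻¹ • 1) = 0) :
    (0 : Matrix (Fin n) (Fin n) ℝ) =
      A * C + C * Aᵀ + Q * ((1 - τ • A)⁻¹)ᵀ + (1 - τ • A)⁻¹ * Q :=
  generalized_fluctuation_dissipation_general A Q R τ hτ hA hR hRQ C Sxη Sηx Sηη hsymm hlyap
end

section
/- Let A be an n×n real Hurwitz matrix, τ > 0, Q an n×n real symmetric positive-semidefinite matrix, and R a symmetric positive-semidefinite matrix with R·R = 2Q. Let B = (I − τA)⁻¹, M = [[A, R], [0, −τ⁻¹I]], D = [[0, 0], [0, (2τ²)⁻¹I]], and let Σ = [[C, Σxη], [Σηx, Σηη]] be a symmetric 2n×2n real matrix satisfying M·Σ + Σ·Mᵀ + 2D = 0. Then the function s ↦ (top-left n×n block of exp(s·M)·Σ) is differentiable at s = 0 with derivative equal to A·C + Q·Bᵀ. -/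
/-!
The correlation function is `K s = (exp (s • M) * Σ)₁₁`, so `K' 0 = (M * Σ)₁₁ = A * C + R * Σηx`.
The `ηη` and `ηx` blocks of the Lyapunov equation force `Σηη = (2τ)⁻¹ • 1` and
`Σηx * (1 - τ • Aᵀ) = 2⁻¹ • Rᵀ`. Since `A` is Hurwitz, `τ⁻¹ > 0` is not an eigenvalue of `A`, so
`1 - τ • A` is invertible and `R * Σηx = 2⁻¹ • (R * Rᵀ) * Bᵀ = Q * Bᵀ`.
-/

open Matrix Polynomial NormedSpace

theorem hasDerivAt_exp_smul_mul_zero {𝔸 : Type*} [NormedRing 𝔸] [NormedAlgebra ℝ 𝔸]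
    [CompleteSpace 𝔸] (M S : 𝔸) :
    HasDerivAt (fun s : ℝ => exp (s • M) * S) (M * S) 0 := by
  simpa using (hasDerivAt_exp_smul_const (𝕂 := ℝ) M 0).mul_const S

theorem HasDerivAt.matrix_toBlocks₁₁ {m n m' n' : Type*} [Fintype m] [Fintype n]
    [Fintype m'] [Fintype n'] {f : ℝ → Matrix (m ⊕ n) (m' ⊕ n') ℝ}
    {f' : Matrix (m ⊕ n) (m' ⊕ n') ℝ} {x : ℝ} (hf : HasDerivAt f f' x) :
    HasDerivAt (fun s => (f s).toBlocks₁₁) f'.toBlocks₁₁ x :=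
  hasDerivAt_pi.2 fun i => hasDerivAt_pi.2 fun j =>
    hasDerivAt_pi.1 (hasDerivAt_pi.1 hf (Sum.inl i)) (Sum.inl j)

namespace Matrix

variable {m : Type*} [Fintype m] [DecidableEq m]

theorem charpoly_eval_ne_zero_of_forall_root_re_neg {A : Matrix m m ℝ}
    (hA : ∀ μ : ℂ, ((A.map (Complex.ofReal)).charpoly).IsRoot μ → μ.re < 0)
    {t : ℝ} (ht : 0 ≤ t) : A.charpoly.eval t ≠ 0 := by
  intro h
  have hroot : (A.map Complex.ofRealHom).charpoly.IsRoot t := by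
    rw [charpoly_map]
    exact IsRoot.map h
  exact (hA t hroot).not_ge (by simpa using ht)

theorem isUnit_det_one_sub_smul {K : Type*} [Field K] {A : Matrix m m K} {τ : K} (hτ : τ ≠ 0)
    (heval : A.charpoly.eval τ⁻¹ ≠ 0) : IsUnit (1 - τ • A).det := by
  have hfactor : 1 - τ • A = τ • (scalar m τ⁻¹ - A) := by
    rw [smul_sub, scalar_apply, ← smul_one_eq_diagonal, smul_smul, mul_inv_cancel₀ hτ, one_smul]
  rw [isUnit_iff_ne_zero, hfactor, det_smul, ← eval_charpoly]
  exact mul_ne_zero (pow_ne_zero _ hτ) heval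

end Matrix

def IsLyapunovSolution {ι 𝕜 : Type*} [Fintype ι] [CommRing 𝕜] (M D S : Matrix ι ι 𝕜) : Prop :=
  M * S + S * Mᵀ + (2 : 𝕜) • D = 0

section ColoredNoise

variable {m p : Type*} [Fintype m] [Fintype p] [DecidableEq p]

noncomputable def coloredNoiseDrift (A : Matrix m m ℝ) (R : Matrix m p ℝ) (τ : ℝ) :
    Matrix (m ⊕ p) (m ⊕ p) ℝ :=
  fromBlocks A R 0 (-τ⁻¹ • 1)

noncomputable def coloredNoiseDiffusion (τ : ℝ) : Matrix (m ⊕ p) (m ⊕ p) ℝ :=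
  fromBlocks 0 0 0 ((2 * τ ^ 2)⁻¹ • 1)

variable {A : Matrix m m ℝ} {R : Matrix m p ℝ} {τ : ℝ}
  {C : Matrix m m ℝ} {Sxη : Matrix m p ℝ} {Sηx : Matrix p m ℝ} {Sηη : Matrix p p ℝ}

theorem coloredNoiseDrift_mul_toBlocks₁₁ :
    (coloredNoiseDrift A R τ * fromBlocks C Sxη Sηx Sηη).toBlocks₁₁ = A * C + R * Sηx := by
  rw [coloredNoiseDrift, fromBlocks_multiply, toBlocks_fromBlocks₁₁]

namespace IsLyapunovSolution

variable (h : IsLyapunovSolution (coloredNoiseDrift A R τ) (coloredNoiseDiffusion τ)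
  (fromBlocks C Sxη Sηx Sηη))
include h

theorem coloredNoise_lowerBlocks :
    Sηx * Aᵀ + Sηη * Rᵀ = τ⁻¹ • Sηx ∧ (2 * τ⁻¹) • Sηη = (τ ^ 2)⁻¹ • 1 := by
  rw [IsLyapunovSolution, coloredNoiseDrift, coloredNoiseDiffusion, fromBlocks_transpose,
    fromBlocks_multiply, fromBlocks_multiply, fromBlocks_smul, fromBlocks_add, fromBlocks_add,
    ← fromBlocks_zero, fromBlocks_inj] at h
  obtain ⟨-, -, hηx, hηη⟩ := h
  simp only [Matrix.zero_mul, zero_add, transpose_zero, Matrix.mul_zero, transpose_smul,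
    transpose_one, Matrix.smul_mul, Matrix.mul_smul, Matrix.one_mul, Matrix.mul_one] at hηx hηη
  constructor
  · linear_combination (norm := module) hηx
  · linear_combination (norm := skip) -hηη
    match_scalars <;> ring

theorem coloredNoise_noiseCov_eq (hτ : τ ≠ 0) : Sηη = (2 * τ)⁻¹ • 1 := by
  linear_combination (norm := skip) (τ / 2) • h.coloredNoise_lowerBlocks.2
  match_scalars <;> field_simp <;> ring

variable [DecidableEq m]

theorem coloredNoise_crossCov_mul (hτ : τ ≠ 0) : Sηx * (1 - τ • Aᵀ) = (2 : ℝ)⁻¹ • Rᵀ := by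
  have hηx := h.coloredNoise_lowerBlocks.1
  rw [h.coloredNoise_noiseCov_eq hτ, Matrix.smul_mul, Matrix.one_mul] at hηx
  rw [Matrix.mul_sub, Matrix.mul_one, Matrix.mul_smul]
  linear_combination (norm := skip) (-τ) • hηx
  match_scalars <;> field_simp <;> ring

theorem coloredNoise_mul_crossCov (hτ : τ ≠ 0) (hB : IsUnit (1 - τ • A).det) :
    R * Sηx = ((2 : ℝ)⁻¹ • (R * Rᵀ)) * ((1 - τ • A)⁻¹)ᵀ := by
  have hBT : IsUnit (1 - τ • Aᵀ).det := by
    rwa [← transpose_one, ← transpose_smul, ← transpose_sub, det_transpose]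
  have hSηx : Sηx = ((2 : ℝ)⁻¹ • Rᵀ) * (1 - τ • Aᵀ)⁻¹ := by
    rw [← h.coloredNoise_crossCov_mul hτ, mul_nonsing_inv_cancel_right _ _ hBT]
  rw [hSηx, transpose_nonsing_inv, transpose_sub, transpose_smul, transpose_one,
    ← Matrix.mul_assoc, Matrix.mul_smul, Matrix.smul_mul]

end IsLyapunovSolution

end ColoredNoise

attribute [local instance] Matrix.normedAddCommGroup Matrix.normedSpace

theorem correlation_first_derivative_general {n : ℕ} (A Q R : Matrix (Fin n) (Fin n) ℝ) (τ : ℝ)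
    (hτ : 0 < τ)
    (hA : ∀ μ : ℂ, ((A.map (Complex.ofReal)).charpoly).IsRoot μ → μ.re < 0)
    (hR : R.PosSemidef) (hRQ : R * R = (2 : ℝ) • Q)
    (C Sxη Sηx Sηη : Matrix (Fin n) (Fin n) ℝ)
    (hlyap :
      fromBlocks A R 0 (-τ⁻¹ • 1) * fromBlocks C Sxη Sηx Sηη
        + fromBlocks C Sxη Sηx Sηη * (fromBlocks A R 0 (-τ⁻¹ • 1))ᵀ
        + (2 : ℝ) • fromBlocks 0 0 0 ((2 * τ ^ 2)⁻¹ • 1) = 0) :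
    HasDerivAt
      (fun s : ℝ =>
        ((NormedSpace.exp (s • fromBlocks A R 0 (-τ⁻¹ • 1)) * fromBlocks C Sxη Sηx Sηη :
            Matrix (Fin n ⊕ Fin n) (Fin n ⊕ Fin n) ℝ)).toBlocks₁₁)
      (A * C + Q * ((1 - τ • A)⁻¹)ᵀ) 0 := by
  have hB : IsUnit (1 - τ • A).det :=
    isUnit_det_one_sub_smul hτ.ne'
      (charpoly_eval_ne_zero_of_forall_root_re_neg hA (inv_nonneg.2 hτ.le))
  have hcross : R * Sηx = Q * ((1 - τ • A)⁻¹)ᵀ := by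
    rw [IsLyapunovSolution.coloredNoise_mul_crossCov hlyap hτ.ne' hB,
      (isHermitian_iff_isSymm.1 hR.1).eq, hRQ, smul_smul, inv_mul_cancel₀ two_ne_zero, one_smul]
  have hK : HasDerivAt (fun s : ℝ => exp (s • coloredNoiseDrift A R τ) * fromBlocks C Sxη Sηx Sηη)
      (coloredNoiseDrift A R τ * fromBlocks C Sxη Sηx Sηη) 0 :=
    -- `HasDerivAt` depends only on the topology, which the operator norm shares with the sup norm.
    open scoped Norms.Operator in hasDerivAt_exp_smul_mul_zero _ _
  rw [← hcross, ← coloredNoiseDrift_mul_toBlocks₁₁]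
  exact hK.matrix_toBlocks₁₁

/-- With the notation of the colored-noise system: the top-left block of `exp (s • M) * Σ`
is differentiable at `s = 0` with derivative `A * C + Q * Bᵀ`, where `B = (I - τ • A)⁻¹`. -/
theorem correlation_first_derivative {n : ℕ} (A Q R : Matrix (Fin n) (Fin n) ℝ) (τ : ℝ)
    (hτ : 0 < τ)
    (hA : ∀ μ : ℂ, ((A.map (Complex.ofReal)).charpoly).IsRoot μ → μ.re < 0)
    (hQ : Q.PosSemidef) (hR : R.PosSemidef) (hRQ : R * R = (2 : ℝ) • Q)
    (C Sxη Sηx Sηη : Matrix (Fin n) (Fin n) ℝ)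
    (hsymm : (fromBlocks C Sxη Sηx Sηη)ᵀ = fromBlocks C Sxη Sηx Sηη)
    (hlyap :
      fromBlocks A R 0 (-τ⁻¹ • 1) * fromBlocks C Sxη Sηx Sηη
        + fromBlocks C Sxη Sηx Sηη * (fromBlocks A R 0 (-τ⁻¹ • 1))ᵀ
        + (2 : ℝ) • fromBlocks 0 0 0 ((2 * τ ^ 2)⁻¹ • 1) = 0) :
    HasDerivAt
      (fun s : ℝ =>
        ((NormedSpace.exp (s • fromBlocks A R 0 (-τ⁻¹ • 1)) * fromBlocks C Sxη Sηx Sηη :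
            Matrix (Fin n ⊕ Fin n) (Fin n ⊕ Fin n) ℝ)).toBlocks₁₁)
      (A * C + Q * ((1 - τ • A)⁻¹)ᵀ) 0 :=
  correlation_first_derivative_general A Q R τ hτ hA hR hRQ C Sxη Sηx Sηη hlyap
end

section
/- Let A be an n×n real Hurwitz matrix, τ > 0, Q an n×n real symmetric positive-semidefinite matrix, and R a symmetric positive-semidefinite matrix with R·R = 2Q. Let B = (I − τA)⁻¹, M = [[A, R], [0, −τ⁻¹I]], D = [[0, 0], [0, (2τ²)⁻¹I]], and let Σ = [[C, Σxη], [Σηx, Σηη]] be a symmetric 2n×2n real matrix satisfying M·Σ + Σ·Mᵀ + 2D = 0. Then the top-left n×n block of M²·Σ equals A·(A·C + Q·Bᵀ) − τ⁻¹·Q·Bᵀ, and this matrix is symmetric. -/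
open Matrix Polynomial

lemma charpoly_eval'_s11 {n : ℕ} {K : Type*} [CommRing K] (A : Matrix (Fin n) (Fin n) K) (r : K) :
    A.charpoly.eval r = (r • (1 : Matrix (Fin n) (Fin n) K) - A).det := by
  rw [Matrix.charpoly, ← Polynomial.coe_evalRingHom, RingHom.map_det]
  congr 1
  ext i j
  by_cases h : i = j <;>
    simp [h, charmatrix_apply, Matrix.one_apply, Matrix.smul_apply, Matrix.sub_apply]

/-- With the notation of the colored-noise system: the top-left block of `M² * Σ` equals
`A * (A * C + Q * Bᵀ) - τ⁻¹ • (Q * Bᵀ)` with `B = (I - τ • A)⁻¹`, and this matrix is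
symmetric. -/
theorem correlation_second_derivative {n : ℕ} (A Q R : Matrix (Fin n) (Fin n) ℝ) (τ : ℝ)
    (hτ : 0 < τ)
    (hA : ∀ μ : ℂ, ((A.map (Complex.ofReal)).charpoly).IsRoot μ → μ.re < 0)
    (hQ : Q.PosSemidef) (hR : R.PosSemidef) (hRQ : R * R = (2 : ℝ) • Q)
    (C Sxη Sηx Sηη : Matrix (Fin n) (Fin n) ℝ)
    (hsymm : (fromBlocks C Sxη Sηx Sηη)ᵀ = fromBlocks C Sxη Sηx Sηη)
    (hlyap :
      fromBlocks A R 0 (-τ⁻¹ • 1) * fromBlocks C Sxη Sηx Sηη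
        + fromBlocks C Sxη Sηx Sηη * (fromBlocks A R 0 (-τ⁻¹ • 1))ᵀ
        + (2 : ℝ) • fromBlocks 0 0 0 ((2 * τ ^ 2)⁻¹ • 1) = 0) :
    (fromBlocks A R 0 (-τ⁻¹ • 1) * fromBlocks A R 0 (-τ⁻¹ • 1)
        * fromBlocks C Sxη Sηx Sηη).toBlocks₁₁
      = A * (A * C + Q * ((1 - τ • A)⁻¹)ᵀ) - τ⁻¹ • (Q * ((1 - τ • A)⁻¹)ᵀ) ∧
    (A * (A * C + Q * ((1 - τ • A)⁻¹)ᵀ) - τ⁻¹ • (Q * ((1 - τ • A)⁻¹)ᵀ))ᵀ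
      = A * (A * C + Q * ((1 - τ • A)⁻¹)ᵀ) - τ⁻¹ • (Q * ((1 - τ • A)⁻¹)ᵀ) := by
  have hτ0 : τ ≠ 0 := ne_of_gt hτ
  set B : Matrix (Fin n) (Fin n) ℝ := (1 - τ • A)⁻¹ with hBdef
  -- invertibility of 1 - τ A
  have hdet : IsUnit (1 - τ • A).det := by
    rw [isUnit_iff_ne_zero]
    intro h0
    have h1 : (1 : Matrix (Fin n) (Fin n) ℝ) - τ • A
        = τ • (τ⁻¹ • (1 : Matrix (Fin n) (Fin n) ℝ) - A) := by
      rw [smul_sub, smul_smul, mul_inv_cancel₀ hτ0, one_smul]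
    have h2 : A.charpoly.eval τ⁻¹ = 0 := by
      rw [h1, det_smul] at h0
      rcases mul_eq_zero.mp h0 with h | h
      · exact absurd h (pow_ne_zero _ hτ0)
      · rw [charpoly_eval'_s11]; exact h
    have h3 : ((A.map Complex.ofReal).charpoly).IsRoot ((τ⁻¹ : ℝ) : ℂ) := by
      have hmap : A.map Complex.ofReal = A.map Complex.ofRealHom := rfl
      rw [hmap, Matrix.charpoly_map A Complex.ofRealHom, Polynomial.IsRoot, Polynomial.eval_map,
        show ((τ⁻¹:ℝ):ℂ) = Complex.ofRealHom τ⁻¹ from rfl,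
        Polynomial.eval₂_at_apply, h2, map_zero]
    have := hA _ h3
    rw [Complex.ofReal_re] at this
    exact absurd this (not_lt.mpr (le_of_lt (inv_pos.mpr hτ)))
  -- basic transposes
  have hQt : Qᵀ = Q := hQ.1
  have hRt : Rᵀ = R := hR.1
  -- B facts
  have hBmul : (1 - τ • A) * B = 1 := Matrix.mul_nonsing_inv _ hdet
  have hmulB : B * (1 - τ • A) = 1 := Matrix.nonsing_inv_mul _ hdet
  have hAB : A * B = τ⁻¹ • B - τ⁻¹ • 1 := by
    have hB2 := hBmul
    rw [sub_mul, one_mul, smul_mul_assoc] at hB2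
    have h2 : τ • (A * B) = B - 1 := by
      rw [eq_sub_iff_add_eq, ← hB2]; abel
    calc A * B = τ⁻¹ • (τ • (A * B)) := by rw [smul_smul, inv_mul_cancel₀ hτ0, one_smul]
    _ = τ⁻¹ • (B - 1) := by rw [h2]
    _ = τ⁻¹ • B - τ⁻¹ • 1 := smul_sub _ _ _
  have hBtAt : Bᵀ * Aᵀ = τ⁻¹ • Bᵀ - τ⁻¹ • 1 := by
    have h := congrArg Matrix.transpose hAB
    simpa [Matrix.transpose_mul, Matrix.transpose_smul, Matrix.transpose_sub] using h
  -- block equations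
  rw [← fromBlocks_zero] at hlyap
  simp only [fromBlocks_transpose, fromBlocks_multiply, fromBlocks_add, fromBlocks_smul,
    fromBlocks_inj] at hlyap
  obtain ⟨e11, e12, _e21, e22⟩ := hlyap
  -- symmetry blocks
  rw [fromBlocks_transpose, fromBlocks_inj] at hsymm
  obtain ⟨hCt, hSηxt, hSxηt, _⟩ := hsymm
  -- Sηη
  have hSηη : Sηη = (2*τ)⁻¹ • (1 : Matrix (Fin n) (Fin n) ℝ) := by
    have h2 : Sηη - (2*τ)⁻¹ • (1 : Matrix (Fin n) (Fin n) ℝ)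
        = (-(τ/2)) • ((0 : Matrix (Fin n) (Fin n) ℝ) * Sxη + -τ⁻¹ • 1 * Sηη
            + (Sηx * (0 : Matrix (Fin n) (Fin n) ℝ)ᵀ + Sηη * (-τ⁻¹ • 1)ᵀ)
            + (2:ℝ) • (2 * τ ^ 2)⁻¹ • (1 : Matrix (Fin n) (Fin n) ℝ)) := by
      simp only [Matrix.zero_mul, Matrix.mul_zero, Matrix.transpose_zero, Matrix.transpose_smul,
        Matrix.transpose_one, neg_mul, mul_neg, Matrix.transpose_neg, smul_mul_assoc,
        mul_smul_comm, Matrix.one_mul, Matrix.mul_one,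
        zero_add, add_zero, neg_smul, smul_smul, smul_add, smul_neg, smul_sub]
      match_scalars <;> (field_simp; try ring)
    rw [e22, smul_zero, sub_eq_zero] at h2
    exact h2
  -- Sxη
  have h3 : (1 - τ • A) * Sxη = (2:ℝ)⁻¹ • R := by
    have h4 : (1 - τ • A) * Sxη - (2:ℝ)⁻¹ • R
        = (-τ) • (A * Sxη + R * Sηη + (C * (0 : Matrix (Fin n) (Fin n) ℝ)ᵀ
            + Sxη * (-τ⁻¹ • 1)ᵀ) + (2:ℝ) • (0 : Matrix (Fin n) (Fin n) ℝ)) := by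
      rw [hSηη]
      simp only [Matrix.mul_zero, Matrix.zero_mul, Matrix.transpose_zero, Matrix.transpose_smul,
        Matrix.transpose_one, neg_mul, mul_neg, Matrix.transpose_neg, smul_mul_assoc,
        mul_smul_comm, Matrix.one_mul, Matrix.mul_one, zero_add, add_zero, smul_zero, neg_smul,
        smul_smul, smul_add, smul_neg, smul_sub, sub_mul]
      match_scalars <;> (field_simp; try ring)
    rw [e12, smul_zero, sub_eq_zero] at h4
    exact h4
  have hSxη : Sxη = (2:ℝ)⁻¹ • (B * R) := by
    have h := congrArg (fun X => B * X) h3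
    simpa [← Matrix.mul_assoc, hmulB, Matrix.mul_smul] using h
  have hSηx : Sηx = (2:ℝ)⁻¹ • (R * Bᵀ) := by
    rw [← hSxηt, hSxη]
    simp [Matrix.transpose_smul, Matrix.transpose_mul, hRt]
  -- products with R
  have hRS : R * Sηx = Q * Bᵀ := by
    rw [hSηx, mul_smul_comm, ← Matrix.mul_assoc, hRQ, smul_mul_assoc, smul_smul]
    norm_num
  have hSR : Sxη * Rᵀ = B * Q := by
    rw [hRt, hSxη, smul_mul_assoc, Matrix.mul_assoc, hRQ, mul_smul_comm, smul_smul]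
    norm_num
  -- cleaned (1,1) Lyapunov equation
  have e11' : A * C + C * Aᵀ + Q * Bᵀ + B * Q = 0 := by
    rw [hRS, hSR, smul_zero, add_zero] at e11
    rw [← e11]; abel
  have hCAt : C * Aᵀ = -(A * C) - Q * Bᵀ - B * Q := by
    rw [← sub_eq_zero, ← e11']; abel
  have hv : Q * (Bᵀ * Aᵀ) = τ⁻¹ • (Q * Bᵀ) - τ⁻¹ • Q := by
    rw [hBtAt, mul_sub, mul_smul_comm, mul_smul_comm, Matrix.mul_one]
  have hiv : A * (B * Q) = τ⁻¹ • (B * Q) - τ⁻¹ • Q := by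
    rw [← Matrix.mul_assoc, hAB, sub_mul, smul_mul_assoc, smul_mul_assoc, Matrix.one_mul]
  constructor
  · -- first goal
    simp only [fromBlocks_multiply, toBlocks_fromBlocks₁₁]
    simp only [Matrix.mul_zero, Matrix.zero_mul, add_zero, zero_add, neg_mul, mul_neg,
      smul_mul_assoc, mul_smul_comm, Matrix.mul_one, Matrix.one_mul, add_mul, neg_smul,
      Matrix.mul_assoc]
    rw [hRS]
    simp only [mul_add, mul_sub, smul_add, smul_sub]
    match_scalars <;> ring
  · -- symmetry
    simp only [Matrix.transpose_sub, Matrix.transpose_smul, Matrix.transpose_mul,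
      Matrix.transpose_add, Matrix.transpose_transpose, hCt, hQt]
    rw [hCAt]
    simp only [add_mul, sub_mul, neg_mul, Matrix.mul_assoc]
    rw [hCAt, hv]
    simp only [mul_add, mul_sub, mul_neg, smul_add, smul_sub]
    rw [hiv]
    match_scalars <;> ring
end

section
/- Let A, C, Q, B be n×n real matrices with C and Q symmetric, and let τ > 0. Define K₁ := A·C + Q·Bᵀ, K₂ := A·K₁ − τ⁻¹·Q·Bᵀ, and T := A·K₂ + τ⁻²·(Q·Bᵀ − Q) (equivalently T = A³C + A²QBᵀ − τ⁻¹AQBᵀ + τ⁻²QBᵀ − τ⁻²Q). Suppose K₁ is skew-symmetric and K₂ is symmetric. Then ½·(T − Tᵀ) = τ⁻²·K₁ + ½·( A·(K₂ − τ⁻²·C) − (K₂ − τ⁻²·C)·Aᵀ ). In particular, if T is skew-symmetric, then T = τ⁻²·K₁ + ½·( A·(K₂ − τ⁻²·C) − (K₂ − τ⁻²·C)·Aᵀ ). -/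
open Matrix

/-- Colored-LIM third-derivative identity: with `C`, `Q` symmetric, `τ > 0`,
`K₁ := A * C + Q * Bᵀ` skew-symmetric, `K₂ := A * K₁ - τ⁻¹ • (Q * Bᵀ)` symmetric, and
`T := A * K₂ + τ⁻² • (Q * Bᵀ - Q)`, one has
`½ • (T - Tᵀ) = τ⁻² • K₁ + ½ • (A * (K₂ - τ⁻² • C) - (K₂ - τ⁻² • C) * Aᵀ)`; in particular,
if `T` is skew-symmetric then `T = τ⁻² • K₁ + ½ • (A * (K₂ - τ⁻² • C) - (K₂ - τ⁻² • C) * Aᵀ)`. -/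
theorem third_derivative_identity {n : ℕ} (A C Q B : Matrix (Fin n) (Fin n) ℝ) (τ : ℝ)
    (hτ : 0 < τ) (hC : Cᵀ = C) (hQ : Qᵀ = Q)
    (K₁ K₂ T : Matrix (Fin n) (Fin n) ℝ)
    (hK₁ : K₁ = A * C + Q * Bᵀ)
    (hK₂ : K₂ = A * K₁ - τ⁻¹ • (Q * Bᵀ))
    (hT : T = A * K₂ + (τ ^ 2)⁻¹ • (Q * Bᵀ - Q))
    (hK₁skew : K₁ᵀ = -K₁)
    (hK₂symm : K₂ᵀ = K₂) :
    (1 / 2 : ℝ) • (T - Tᵀ)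
      = (τ ^ 2)⁻¹ • K₁
        + (1 / 2 : ℝ) • (A * (K₂ - (τ ^ 2)⁻¹ • C) - (K₂ - (τ ^ 2)⁻¹ • C) * Aᵀ) ∧
    (Tᵀ = -T →
      T = (τ ^ 2)⁻¹ • K₁
        + (1 / 2 : ℝ) • (A * (K₂ - (τ ^ 2)⁻¹ • C) - (K₂ - (τ ^ 2)⁻¹ • C) * Aᵀ)) := by

  have hBQ : B * Q = -K₁ - C * Aᵀ := by
    have h := congrArg Matrix.transpose hK₁
    rw [transpose_add, transpose_mul, transpose_mul, transpose_transpose, hC, hQ, hK₁skew] at h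
    linear_combination (norm := abel) -h
  have hQB : Q * Bᵀ = K₁ - A * C := by
    rw [hK₁]; abel
  have hTt : Tᵀ = K₂ * Aᵀ + (τ ^ 2)⁻¹ • (B * Q - Q) := by
    rw [hT, transpose_add, transpose_mul, transpose_smul, transpose_sub, transpose_mul,
      transpose_transpose, hQ, hK₂symm]
  have main : (1 / 2 : ℝ) • (T - Tᵀ)
      = (τ ^ 2)⁻¹ • K₁
        + (1 / 2 : ℝ) • (A * (K₂ - (τ ^ 2)⁻¹ • C) - (K₂ - (τ ^ 2)⁻¹ • C) * Aᵀ) := by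
    rw [hTt, hT, hBQ, hQB, mul_sub, sub_mul, mul_smul_comm, smul_mul_assoc]
    module
  refine ⟨main, fun hskew => ?_⟩
  have h2 : (1 / 2 : ℝ) • (T - Tᵀ) = T := by
    rw [hskew]; rw [sub_neg_eq_add]
    rw [smul_add]
    module
  rw [← h2, main]
end
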